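/- With the setup in the context, for every x > 0 and every zero z of p, at least one of the following holds: |z²| ≤ x, or |z² − α| ≤ τ(x), or |z² − β| ≤ τ(x). (Equivalently, the block-column Gershgorin set of the similarity-transformed squared companion matrix is the union of the disc of radius x about 0 and the two discs of common radius τ(x) about α and β.) -/

import Mathlib

open Polynomial

/-- The spectral norm (operator norm induced by the Euclidean norm) of a complex matrix. -/
noncomputable def specNorm {d : ℕ} (M : Matrix (Fin d) (Fin d) ℂ) : ℝ :=
  ‖Matrix.toEuclideanCLM (𝕜 := ℂ) M‖

/-!
Put `w = z²`. After padding `p` to the even degree `n = 2m` (multiplying by `z` when `ℓ` is odd),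
a direct computation shows that the row vector `y = (1, z)` satisfies
`y (∑_{k<m} w^k A_k) = w^m y`. Conjugating by `S`, the nonzero row `v = y S` satisfies
`v N = w^(m-1) v diag(w - α, w - β)` with `N = ∑_{k<m-1} w^k T_k`. The right side has norm at
least `|w|^(m-1) min(|w - α|, |w - β|) ‖v‖` and the left side at most `∑_k |w|^k ‖T_k‖ ‖v‖`, so
`min(|w - α|, |w - β|) ≤ ∑_k ‖T_k‖ / |w|^(m-1-k)`, which is at most `τ(x)` once `|w| > x`.
-/

open Matrix WithLp

/-- The matrix `A_j` of the statement for every `j < m`: the `if` supplies the convention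
`a_{-1} = 0` that turns the general formula into `A_0`, since `2 * 0 - 1 = 0` in `ℕ`. -/
def squaredCompanionBlock {R : Type*} [Ring R] (a : ℕ → R) (n j : ℕ) :
    Matrix (Fin 2) (Fin 2) R :=
  !![-a (2 * j), a (n - 1) * a (2 * j) - if j = 0 then 0 else a (2 * j - 1);
     -a (2 * j + 1), a (n - 1) * a (2 * j + 1) - a (2 * j)]

lemma sum_range_two_mul {M : Type*} [AddCommMonoid M] (f : ℕ → M) (m : ℕ) :
    ∑ j ∈ Finset.range (2 * m), f j = ∑ k ∈ Finset.range m, (f (2 * k) + f (2 * k + 1)) := by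
  induction m with
  | zero => simp
  | succ m ih => rw [Nat.mul_succ, Finset.sum_range_succ, Finset.sum_range_succ,
      Finset.sum_range_succ, ih, add_assoc]

section CompanionBlocks

variable {R : Type*} [CommRing R]

lemma sum_range_mul_pow_two_mul (a : ℕ → R) (m : ℕ) (z : R) :
    ∑ j ∈ Finset.range (2 * m), a j * z ^ j
      = ∑ k ∈ Finset.range m, (z ^ 2) ^ k * a (2 * k)
        + z * ∑ k ∈ Finset.range m, (z ^ 2) ^ k * a (2 * k + 1) := by
  rw [sum_range_two_mul, Finset.mul_sum, ← Finset.sum_add_distrib]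
  refine Finset.sum_congr rfl fun k _ => ?_
  ring

lemma sum_range_pow_mul_shift (a : ℕ → R) {m : ℕ} (hm : m ≠ 0) (w : R) :
    ∑ k ∈ Finset.range m, (if k = 0 then 0 else w ^ k * a (2 * k - 1))
      = w * ∑ k ∈ Finset.range m, w ^ k * a (2 * k + 1) - w ^ m * a (2 * m - 1) := by
  obtain ⟨K, rfl⟩ := Nat.exists_eq_add_one_of_ne_zero hm
  have hodd : ∀ k, 2 * (k + 1) - 1 = 2 * k + 1 := by omega
  rw [Finset.sum_range_succ', Finset.sum_range_succ, mul_add, Finset.mul_sum]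
  simp only [Nat.add_one_ne_zero, if_false, if_true, add_zero, hodd, pow_succ', mul_assoc]
  ring

theorem vecMul_sum_squaredCompanionBlock (a : ℕ → R) {m : ℕ} (hm : m ≠ 0) (z : R)
    (hz : z ^ (2 * m) + ∑ j ∈ Finset.range (2 * m), a j * z ^ j = 0) :
    ![1, z] ᵥ* ∑ k ∈ Finset.range m, (z ^ 2) ^ k • squaredCompanionBlock a (2 * m) k
      = (z ^ 2) ^ m • ![1, z] := by
  rw [sum_range_mul_pow_two_mul, pow_mul] at hz
  have hP := sum_range_pow_mul_shift a hm (z ^ 2)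
  ext j
  fin_cases j <;>
    simp only [vecMul, dotProduct, Fin.sum_univ_two, Matrix.sum_apply, Matrix.smul_apply,
      squaredCompanionBlock, of_apply, cons_val', cons_val_zero, cons_val_one, cons_val_fin_one,
      Fin.zero_eta, Fin.mk_one, Fin.isValue, smul_eq_mul, Pi.smul_apply, one_mul, mul_one,
      mul_neg, mul_sub, mul_ite, mul_zero, Finset.sum_neg_distrib, Finset.sum_sub_distrib,
      mul_left_comm _ (a (2 * m - 1)), ← Finset.mul_sum]
  · linear_combination -hz
  · linear_combination (a (2 * m - 1) - z) * hz - hP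

lemma pow_succ_add_sum_shift {ℓ : ℕ} {a b : ℕ → R} (ha0 : a 0 = 0)
    (ha : ∀ j, 1 ≤ j → j < ℓ + 1 → a j = b (j - 1)) (z : R) :
    z ^ (ℓ + 1) + ∑ j ∈ Finset.range (ℓ + 1), a j * z ^ j
      = z * (z ^ ℓ + ∑ j ∈ Finset.range ℓ, b j * z ^ j) := by
  rw [Finset.sum_range_succ', ha0, zero_mul, add_zero, mul_add, Finset.mul_sum, pow_succ']
  congr 1
  refine Finset.sum_congr rfl fun j hj => ?_
  rw [ha (j + 1) le_add_self (by simpa using hj), Nat.add_sub_cancel, pow_succ']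
  ring

lemma pow_add_sum_eq_zero_of_padding {ℓ m : ℕ} (hm : m = (ℓ + 1) / 2) {a b : ℕ → R}
    (haeven : Even ℓ → ∀ j, j < 2 * m → a j = b j)
    (haodd : ¬ Even ℓ → a 0 = 0 ∧ ∀ j, 1 ≤ j → j < 2 * m → a j = b (j - 1))
    {z : R} (hz : z ^ ℓ + ∑ j ∈ Finset.range ℓ, b j * z ^ j = 0) :
    z ^ (2 * m) + ∑ j ∈ Finset.range (2 * m), a j * z ^ j = 0 := by
  by_cases hℓ : Even ℓ
  · obtain ⟨t, rfl⟩ := hℓ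
    have h2m : 2 * m = t + t := by omega
    rw [← hz, h2m]
    congr 1
    exact Finset.sum_congr rfl fun j hj =>
      by rw [haeven ⟨t, rfl⟩ j (h2m ▸ Finset.mem_range.mp hj)]
  · obtain ⟨ha0, ha⟩ := haodd hℓ
    have h2m : 2 * m = ℓ + 1 := by
      obtain ⟨t, rfl⟩ := Nat.not_even_iff_odd.mp hℓ
      omega
    rw [h2m, pow_succ_add_sum_shift ha0 (h2m ▸ ha), hz, mul_zero]

lemma eq_squaredCompanionBlock {a : ℕ → R} {n K : ℕ} {A : ℕ → Matrix (Fin 2) (Fin 2) R}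
    (hA0 : A 0 = !![-(a 0), a (n - 1) * a 0; -(a 1), a (n - 1) * a 1 - a 0])
    (hA : ∀ j, 1 ≤ j → j ≤ K →
      A j = !![-(a (2 * j)), a (n - 1) * a (2 * j) - a (2 * j - 1);
               -(a (2 * j + 1)), a (n - 1) * a (2 * j + 1) - a (2 * j)])
    {k : ℕ} (hk : k ≤ K) :
    A k = squaredCompanionBlock a n k := by
  rcases Nat.eq_zero_or_pos k with rfl | hk0
  · simp [hA0, squaredCompanionBlock]
  · simp [hA k hk0 hk, squaredCompanionBlock, hk0.ne']

end CompanionBlocks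

lemma vecMul_conj_eq_smul {ι R : Type*} [Fintype ι] [DecidableEq ι] [CommRing R]
    {S Q : Matrix ι ι R} (hS : IsUnit S) {y : ι → R} {c : R} (h : y ᵥ* Q = c • y) :
    (y ᵥ* S) ᵥ* (S⁻¹ * Q * S) = c • (y ᵥ* S) := by
  rw [vecMul_vecMul, ← Matrix.mul_assoc, ← Matrix.mul_assoc,
    mul_nonsing_inv _ ((isUnit_iff_isUnit_det S).mp hS), Matrix.one_mul, ← vecMul_vecMul, h,
    smul_vecMul]

lemma inv_mul_sum_smul_mul {ι R : Type*} [Fintype ι] [DecidableEq ι] [CommRing R]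
    (S : Matrix ι ι R) (A T : ℕ → Matrix ι ι R) (K : ℕ)
    (hT : ∀ k < K, T k = S⁻¹ * A k * S) (w : R) :
    S⁻¹ * (∑ k ∈ Finset.range (K + 1), w ^ k • A k) * S
      = ∑ k ∈ Finset.range K, w ^ k • T k + w ^ K • (S⁻¹ * A K * S) := by
  simp only [Finset.mul_sum, Finset.sum_mul, Matrix.mul_smul, Matrix.smul_mul]
  rw [Finset.sum_range_succ]
  congr 1
  exact Finset.sum_congr rfl fun k hk => by rw [hT k (Finset.mem_range.mp hk)]

section SpectralNorm

open scoped Matrix.Norms.L2Operator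

variable {d : ℕ}

lemma norm_toLp_star (v : Fin d → ℂ) :
    ‖(toLp 2 (star v) : EuclideanSpace ℂ (Fin d))‖
      = ‖(toLp 2 v : EuclideanSpace ℂ (Fin d))‖ := by
  simp [EuclideanSpace.norm_eq]

lemma norm_vecMul_le_specNorm (M : Matrix (Fin d) (Fin d) ℂ) (v : Fin d → ℂ) :
    ‖(toLp 2 (v ᵥ* M) : EuclideanSpace ℂ (Fin d))‖
      ≤ specNorm M * ‖(toLp 2 v : EuclideanSpace ℂ (Fin d))‖ := by
  have h := l2_opNorm_mulVec Mᴴ (toLp 2 (star v))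
  rw [l2_opNorm_conjTranspose, norm_toLp_star] at h
  have hv : v ᵥ* M = star (Mᴴ *ᵥ star v) := by
    rw [star_mulVec, star_star, conjTranspose_conjTranspose]
  rwa [hv, norm_toLp_star]

lemma norm_vecMul_sum_smul_le {ι : Type*} (s : Finset ι) (c : ι → ℂ)
    (M : ι → Matrix (Fin d) (Fin d) ℂ) (v : Fin d → ℂ) :
    ‖(toLp 2 (v ᵥ* ∑ k ∈ s, c k • M k) : EuclideanSpace ℂ (Fin d))‖
      ≤ (∑ k ∈ s, ‖c k‖ * specNorm (M k)) * ‖(toLp 2 v : EuclideanSpace ℂ (Fin d))‖ := by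
  rw [vecMul_sum, toLp_sum, Finset.sum_mul]
  refine (norm_sum_le _ _).trans (Finset.sum_le_sum fun k _ => ?_)
  rw [vecMul_smul, toLp_smul, norm_smul, mul_assoc]
  gcongr
  exact norm_vecMul_le_specNorm _ _

end SpectralNorm

lemma mul_norm_le_norm_vecMul_diagonal {ι : Type*} [Fintype ι] [DecidableEq ι] {r : ℝ}
    (hr : 0 ≤ r) {e : ι → ℂ} (he : ∀ i, r ≤ ‖e i‖) (v : ι → ℂ) :
    r * ‖(toLp 2 v : EuclideanSpace ℂ ι)‖
      ≤ ‖(toLp 2 (v ᵥ* diagonal e) : EuclideanSpace ℂ ι)‖ := by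
  refine le_of_sq_le_sq ?_ (norm_nonneg _)
  simp only [mul_pow, EuclideanSpace.norm_sq_eq, Finset.mul_sum]
  refine Finset.sum_le_sum fun i _ => ?_
  rw [vecMul_diagonal, norm_mul, mul_pow, mul_comm]
  gcongr
  exact he i

theorem exists_norm_sub_le_of_vecMul_eq {d K : ℕ} [NeZero d]
    (T : ℕ → Matrix (Fin d) (Fin d) ℂ) (e : Fin d → ℂ) {w : ℂ} (hw : w ≠ 0)
    {v : Fin d → ℂ} (hv : v ≠ 0)
    (h : v ᵥ* (∑ k ∈ Finset.range K, w ^ k • T k + w ^ K • diagonal e) = w ^ (K + 1) • v) :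
    ∃ i, ‖w - e i‖ ≤ ∑ k ∈ Finset.range K, specNorm (T k) / ‖w‖ ^ (K - k) := by
  obtain ⟨i, hi⟩ := Finite.exists_min fun i => ‖w - e i‖
  refine ⟨i, ?_⟩
  set V : EuclideanSpace ℂ (Fin d) := toLp 2 v
  have hrow : v ᵥ* ∑ k ∈ Finset.range K, w ^ k • T k =
      w ^ K • (v ᵥ* diagonal fun j => w - e j) := by
    ext j
    have hj := congrFun h j
    simp only [vecMul_add, vecMul_smul, Pi.add_apply, Pi.smul_apply, vecMul_diagonal,
      smul_eq_mul] at hj ⊢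
    linear_combination hj
  have hV : 0 < ‖V‖ := by simpa [V] using hv
  have hwK : 0 < ‖w‖ ^ K := pow_pos (norm_pos_iff.mpr hw) K
  have key : ‖w‖ ^ K * (‖w - e i‖ * ‖V‖)
      ≤ ‖w‖ ^ K * (∑ k ∈ Finset.range K, specNorm (T k) / ‖w‖ ^ (K - k)) * ‖V‖ := calc
    _ ≤ ‖w‖ ^ K * ‖(toLp 2 (v ᵥ* diagonal fun j => w - e j) : EuclideanSpace ℂ (Fin d))‖ := by
        gcongr
        exact mul_norm_le_norm_vecMul_diagonal (norm_nonneg _) hi v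
    _ = ‖(toLp 2 (v ᵥ* ∑ k ∈ Finset.range K, w ^ k • T k) : EuclideanSpace ℂ (Fin d))‖ := by
        rw [hrow, toLp_smul, norm_smul, norm_pow]
    _ ≤ (∑ k ∈ Finset.range K, ‖w ^ k‖ * specNorm (T k)) * ‖V‖ :=
        norm_vecMul_sum_smul_le _ _ _ _
    _ = _ := by
        rw [Finset.mul_sum]
        congr 1
        refine Finset.sum_congr rfl fun k hk => ?_
        rw [norm_pow, ← pow_sub_mul_pow ‖w‖ (Finset.mem_range.mp hk).le]
        field_simp
  rw [mul_assoc (‖w‖ ^ K)] at key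
  exact le_of_mul_le_mul_right (le_of_mul_le_mul_left key hwK) hV

lemma sum_range_div_pow_le_sum_Icc {K : ℕ} {c : ℕ → ℝ} (hc : ∀ k, 0 ≤ c k) {x y : ℝ}
    (hx : 0 < x) (hxy : x ≤ y) :
    ∑ k ∈ Finset.range K, c k / y ^ (K - k) ≤ ∑ k ∈ Finset.Icc 1 K, c (K - k) / x ^ k := by
  have hreflect : ∑ k ∈ Finset.range K, c k / x ^ (K - k)
      = ∑ k ∈ Finset.Icc 1 K, c (K - k) / x ^ k := by
    rw [← Nat.Ico_zero_eq_range, ← Finset.Ico_add_one_right_eq_Icc]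
    convert Finset.sum_Ico_reflect (fun j => c (K - j) / x ^ j) 0 (Nat.le_succ K) using 2
    · rw [Nat.sub_sub_self (Finset.mem_Ico.mp ‹_›).2.le]
    · rw [Nat.add_sub_cancel_left, Nat.sub_zero]
  rw [← hreflect]
  gcongr with k
  exact hc k

theorem block_gershgorin_union_tau_general
    (ℓ : ℕ) (b : ℕ → ℂ) (p : Polynomial ℂ)
    (hp : p = X ^ ℓ + ∑ i ∈ Finset.range ℓ, C (b i) * X ^ i)
    (m n : ℕ) (hm : m = (ℓ + 1) / 2) (hn : n = 2 * m)
    (a : ℕ → ℂ)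
    (haeven : Even ℓ → ∀ j, j < n → a j = b j)
    (haodd : ¬ Even ℓ → a 0 = 0 ∧ ∀ j, 1 ≤ j → j < n → a j = b (j - 1))
    (A : ℕ → Matrix (Fin 2) (Fin 2) ℂ)
    (hA0 : A 0 = !![-(a 0), a (n - 1) * a 0; -(a 1), a (n - 1) * a 1 - a 0])
    (hA : ∀ j, 1 ≤ j → j ≤ m - 1 →
      A j = !![-(a (2 * j)), a (n - 1) * a (2 * j) - a (2 * j - 1);
               -(a (2 * j + 1)), a (n - 1) * a (2 * j + 1) - a (2 * j)])
    (S : Matrix (Fin 2) (Fin 2) ℂ) (hS : IsUnit S)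
    (α β : ℂ)
    (hdiag : S⁻¹ * A (m - 1) * S = !![α, 0; 0, β])
    (T : ℕ → Matrix (Fin 2) (Fin 2) ℂ)
    (hT : ∀ j, j ≤ m - 2 → T j = S⁻¹ * A j * S)
    (τ : ℝ → ℝ)
    (hτ : ∀ x : ℝ, 0 < x →
      τ x = ∑ k ∈ Finset.Icc 1 (m - 1), specNorm (T (m - 1 - k)) / x ^ k)
    : ∀ x : ℝ, 0 < x → ∀ z : ℂ, p.eval z = 0 →
      ‖z ^ 2‖ ≤ x ∨ ‖z ^ 2 - α‖ ≤ τ x ∨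
        ‖z ^ 2 - β‖ ≤ τ x := by
  intro x hx z hz
  subst hn
  have hpad : z ^ (2 * m) + ∑ j ∈ Finset.range (2 * m), a j * z ^ j = 0 :=
    pow_add_sum_eq_zero_of_padding hm haeven haodd (by simpa [hp, eval_finsetSum] using hz)
  obtain ⟨K, rfl⟩ : ∃ K, m = K + 1 :=
    Nat.exists_eq_add_one_of_ne_zero (by rintro rfl; simp at hpad)
  simp only [Nat.add_sub_cancel] at hdiag hτ hA
  have hrow : ![1, z] ᵥ* ∑ k ∈ Finset.range (K + 1), (z ^ 2) ^ k • A k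
      = (z ^ 2) ^ (K + 1) • ![1, z] := by
    rw [Finset.sum_congr rfl fun k hk => congrArg ((z ^ 2) ^ k • ·)
      (eq_squaredCompanionBlock hA0 hA (Nat.lt_succ_iff.mp (Finset.mem_range.mp hk)))]
    exact vecMul_sum_squaredCompanionBlock a K.succ_ne_zero z hpad
  have hconj := inv_mul_sum_smul_mul S A T K (fun k hk => hT k (by omega)) (z ^ 2)
  rw [hdiag, ← diagonal_vec2] at hconj
  rcases le_or_gt ‖z ^ 2‖ x with hsmall | hlarge
  · exact Or.inl hsmall
  have hv : ![1, z] ᵥ* S ≠ 0 := fun h0 => by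
    simpa using congrFun (vecMul_injective_of_isUnit hS (h0.trans (zero_vecMul S).symm)) 0
  obtain ⟨i, hi⟩ := exists_norm_sub_le_of_vecMul_eq T ![α, β]
    (norm_pos_iff.mp (hx.trans hlarge)) hv (hconj ▸ vecMul_conj_eq_smul hS hrow)
  have hτx : ∑ k ∈ Finset.range K, specNorm (T k) / ‖z ^ 2‖ ^ (K - k) ≤ τ x := by
    rw [hτ x hx]
    exact sum_range_div_pow_le_sum_Icc (fun k => norm_nonneg _) hx hlarge.le
  fin_cases i
  · exact Or.inr (Or.inl (hi.trans hτx))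
  · exact Or.inr (Or.inr (hi.trans hτx))

theorem block_gershgorin_union_tau
    (ℓ : ℕ) (hℓ : 3 ≤ ℓ) (b : ℕ → ℂ) (p : Polynomial ℂ)
    (hp : p = X ^ ℓ + ∑ i ∈ Finset.range ℓ, C (b i) * X ^ i)
    (m n : ℕ) (hm : m = (ℓ + 1) / 2) (hn : n = 2 * m)
    (a : ℕ → ℂ)
    (haeven : Even ℓ → ∀ j, j < n → a j = b j)
    (haodd : ¬ Even ℓ → a 0 = 0 ∧ ∀ j, 1 ≤ j → j < n → a j = b (j - 1))
    (A : ℕ → Matrix (Fin 2) (Fin 2) ℂ)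
    (hA0 : A 0 = !![-(a 0), a (n - 1) * a 0; -(a 1), a (n - 1) * a 1 - a 0])
    (hA : ∀ j, 1 ≤ j → j ≤ m - 1 →
      A j = !![-(a (2 * j)), a (n - 1) * a (2 * j) - a (2 * j - 1);
               -(a (2 * j + 1)), a (n - 1) * a (2 * j + 1) - a (2 * j)])
    (S : Matrix (Fin 2) (Fin 2) ℂ) (hS : IsUnit S)
    (α β : ℂ)
    (hdiag : S⁻¹ * A (m - 1) * S = !![α, 0; 0, β])
    (hαβ : ‖α‖ ≤ ‖β‖)
    (T : ℕ → Matrix (Fin 2) (Fin 2) ℂ)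
    (hT : ∀ j, j ≤ m - 2 → T j = S⁻¹ * A j * S)
    (τ : ℝ → ℝ)
    (hτ : ∀ x : ℝ, 0 < x →
      τ x = ∑ k ∈ Finset.Icc 1 (m - 1), specNorm (T (m - 1 - k)) / x ^ k)
    : ∀ x : ℝ, 0 < x → ∀ z : ℂ, p.eval z = 0 →
      ‖z ^ 2‖ ≤ x ∨ ‖z ^ 2 - α‖ ≤ τ x ∨
        ‖z ^ 2 - β‖ ≤ τ x :=
  block_gershgorin_union_tau_general ℓ b p hp m n hm hn a haeven haodd A hA0 hA S hS α β hdiag T hT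
    τ hτ
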